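/- Let M = D - W be a real symmetric positive semidefinite matrix where D is diagonal with strictly positive diagonal entries and W has zero diagonal and nonnegative entries. Then the matrix A = D⁻¹(W + λ_min I), where λ_min ≥ 0 is the smallest eigenvalue of M, has spectral radius 1, i.e., every real eigenvalue θ of A satisfies |θ| ≤ 1. -/

import Mathlib

open Matrix Finset

lemma quad_expand {K : ℕ} (B : Matrix (Fin K) (Fin K) ℝ) (x : Fin K → ℝ) :
    x ⬝ᵥ (B *ᵥ x) = ∑ i, ∑ j, x i * (B i j * x j) := by
  simp [dotProduct, mulVec, Finset.mul_sum]

/-- For `M = D - W` PSD with `D` positive diagonal and `W` nonnegative with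
zero diagonal, the matrix `A = D⁻¹ (W + λ_min I)` has spectral radius 1:
every real eigenvalue `θ` of `A` satisfies `|θ| ≤ 1`. -/
theorem stmt_5 {K : ℕ} (d : Fin K → ℝ) (hd : ∀ i, 0 < d i)
    (W : Matrix (Fin K) (Fin K) ℝ) (hW : W.IsSymm)
    (hWdiag : ∀ i, W i i = 0) (hWpos : ∀ i j, 0 ≤ W i j)
    (M : Matrix (Fin K) (Fin K) ℝ) (hM : M = Matrix.diagonal d - W)
    (hPSD : M.PosSemidef)
    (lammin : ℝ)
    (heig : ∃ v : Fin K → ℝ, v ≠ 0 ∧ M.mulVec v = lammin • v)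
    (hmin : ∀ mu : ℝ, (∃ u : Fin K → ℝ, u ≠ 0 ∧ M.mulVec u = mu • u) → lammin ≤ mu)
    (A : Matrix (Fin K) (Fin K) ℝ)
    (hA : A = Matrix.diagonal (fun i => (d i)⁻¹) * (W + lammin • (1 : Matrix (Fin K) (Fin K) ℝ))) :
    ∀ theta : ℝ, (∃ u : Fin K → ℝ, u ≠ 0 ∧ A.mulVec u = theta • u) → |theta| ≤ 1 := by
  -- λmin ≥ 0
  have hlam : 0 ≤ lammin := by
    obtain ⟨v, hv, hvM⟩ := heig
    have h0 : 0 ≤ v ⬝ᵥ (M *ᵥ v) := by simpa using hPSD.dotProduct_mulVec_nonneg v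
    rw [hvM] at h0
    have hvv : 0 < v ⬝ᵥ v := by
      have hnn : 0 ≤ v ⬝ᵥ v := Finset.sum_nonneg fun i _ => mul_self_nonneg _
      rcases lt_or_eq_of_le hnn with h | h
      · exact h
      · exact absurd (dotProduct_self_eq_zero.mp h.symm) hv
    have : v ⬝ᵥ (lammin • v) = lammin * (v ⬝ᵥ v) := by simp
    nlinarith [this ▸ h0]
  -- N = M - lammin • 1 is PSD
  set N : Matrix (Fin K) (Fin K) ℝ := M - lammin • (1 : Matrix (Fin K) (Fin K) ℝ) with hN
  have hNH : N.IsHermitian := by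
    have h1 : (lammin • (1 : Matrix (Fin K) (Fin K) ℝ)).IsHermitian := by
      simp [Matrix.IsHermitian]
    exact hPSD.1.sub h1
  have hNpsd : N.PosSemidef := by
    apply hNH.posSemidef_iff_eigenvalues_nonneg.mpr
    intro i
    have hw := hNH.mulVec_eigenvectorBasis i
    have hwne : (⇑(hNH.eigenvectorBasis i) : Fin K → ℝ) ≠ 0 := by
      intro h
      apply hNH.eigenvectorBasis.orthonormal.ne_zero i
      ext j
      exact congrFun h j
    have hMw : M *ᵥ ⇑(hNH.eigenvectorBasis i)
        = (hNH.eigenvalues i + lammin) • ⇑(hNH.eigenvectorBasis i) := by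
      have : N *ᵥ ⇑(hNH.eigenvectorBasis i)
          = M *ᵥ ⇑(hNH.eigenvectorBasis i) - lammin • ⇑(hNH.eigenvectorBasis i) := by
        simp [hN, Matrix.sub_mulVec, Matrix.smul_mulVec]
      rw [this] at hw
      rw [sub_eq_iff_eq_add] at hw
      rw [hw]
      ext j
      simp [add_smul]
      ring
    have := hmin (hNH.eigenvalues i + lammin) ⟨_, hwne, hMw⟩
    exact (by linarith : (0:ℝ) ≤ hNH.eigenvalues i)
  -- main argument
  intro theta ⟨u, hu, hAu⟩
  have S_pos : 0 < u ⬝ᵥ (Matrix.diagonal d *ᵥ u) := by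
    rw [quad_expand]
    have : ∀ i ∈ Finset.univ, (0:ℝ) ≤ ∑ j, u i * (Matrix.diagonal d i j * u j) := by
      intro i _
      have : ∑ j, u i * (Matrix.diagonal d i j * u j) = d i * (u i)^2 := by
        rw [Finset.sum_eq_single i]
        · simp [Matrix.diagonal]; ring
        · intro b _ hb; simp [Matrix.diagonal_apply_ne' _ hb]
        · simp
      rw [this]; exact mul_nonneg (hd i).le (sq_nonneg _)
    apply Finset.sum_pos' this
    obtain ⟨i, hi⟩ := Function.ne_iff.mp hu
    refine ⟨i, Finset.mem_univ i, ?_⟩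
    have : ∑ j, u i * (Matrix.diagonal d i j * u j) = d i * (u i)^2 := by
      rw [Finset.sum_eq_single i]
      · simp [Matrix.diagonal]; ring
      · intro b _ hb; simp [Matrix.diagonal_apply_ne' _ hb]
      · simp
    rw [this]
    have hne : u i ≠ 0 := by simpa using hi
    exact mul_pos (hd i) (pow_two_pos_of_ne_zero hne)
  -- key identity : (W + lammin • 1) *ᵥ u = theta • (diagonal d *ᵥ u)
  have hkey : (W + lammin • (1 : Matrix (Fin K) (Fin K) ℝ)) *ᵥ u
      = theta • (Matrix.diagonal d *ᵥ u) := by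
    have h1 : Matrix.diagonal d *ᵥ (A *ᵥ u) = Matrix.diagonal d *ᵥ (theta • u) := by
      rw [hAu]
    rw [hA, ← Matrix.mulVec_mulVec] at h1
    have h2 : Matrix.diagonal d * Matrix.diagonal (fun i => (d i)⁻¹) = 1 := by
      rw [Matrix.diagonal_mul_diagonal]
      ext i j
      by_cases h : i = j
      · subst h; simp [mul_inv_cancel₀ (hd i).ne']
      · simp [Matrix.diagonal_apply_ne _ h, Matrix.one_apply_ne h]
    rw [Matrix.mulVec_mulVec, h2, Matrix.one_mulVec] at h1
    rw [h1, Matrix.mulVec_smul]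
  -- quadratic forms
  have hquad : u ⬝ᵥ ((W + lammin • (1 : Matrix (Fin K) (Fin K) ℝ)) *ᵥ u)
      = theta * (u ⬝ᵥ (Matrix.diagonal d *ᵥ u)) := by
    rw [hkey]; simp
  -- upper bound
  have hWN : W + lammin • (1 : Matrix (Fin K) (Fin K) ℝ) = Matrix.diagonal d - N := by
    rw [hN, hM]; abel
  have hupper : theta ≤ 1 := by
    have h0 : 0 ≤ u ⬝ᵥ (N *ᵥ u) := by simpa using hNpsd.dotProduct_mulVec_nonneg u
    have : u ⬝ᵥ ((W + lammin • (1 : Matrix (Fin K) (Fin K) ℝ)) *ᵥ u)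
        = u ⬝ᵥ (Matrix.diagonal d *ᵥ u) - u ⬝ᵥ (N *ᵥ u) := by
      rw [hWN, Matrix.sub_mulVec, dotProduct_sub]
    rw [hquad] at this
    nlinarith
  -- lower bound : u ⬝ᵥ ((D + W) *ᵥ u) ≥ 0
  have hDW : 0 ≤ u ⬝ᵥ ((Matrix.diagonal d + W) *ᵥ u) := by
    have habs : 0 ≤ (fun i => |u i|) ⬝ᵥ (M *ᵥ (fun i => |u i|)) := by
      simpa using hPSD.dotProduct_mulVec_nonneg (fun i => |u i|)
    rw [quad_expand] at habs ⊢
    refine le_trans (le_trans habs (Finset.sum_le_sum ?_)) le_rfl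
    intro i _
    apply Finset.sum_le_sum
    intro j _
    by_cases h : i = j
    · subst h
      simp only [hM, Matrix.sub_apply, Matrix.add_apply, Matrix.diagonal_apply_eq, hWdiag i]
      nlinarith [abs_mul_abs_self (u i), hd i]
    · rw [hM]
      simp only [Matrix.sub_apply, Matrix.add_apply, Matrix.diagonal_apply_ne _ h]
      have h1 : |u i| * ((0 - W i j) * |u j|) = -(W i j * |u i * u j|) := by
        rw [abs_mul]; ring
      have h2 : u i * ((0 + W i j) * u j) = W i j * (u i * u j) := by ring
      rw [h1, h2]
      have := neg_abs_le (u i * u j)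
      nlinarith [hWpos i j, abs_nonneg (u i * u j)]
  have hlower : -1 ≤ theta := by
    have h3 : u ⬝ᵥ ((W + lammin • (1 : Matrix (Fin K) (Fin K) ℝ)) *ᵥ u)
        = u ⬝ᵥ ((Matrix.diagonal d + W) *ᵥ u) - u ⬝ᵥ (Matrix.diagonal d *ᵥ u)
          + lammin * (u ⬝ᵥ u) := by
      rw [Matrix.add_mulVec, Matrix.add_mulVec, dotProduct_add, dotProduct_add,
        Matrix.smul_mulVec, Matrix.one_mulVec, dotProduct_smul]
      simp [smul_eq_mul]
    rw [hquad] at h3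
    have huu : 0 ≤ u ⬝ᵥ u := Finset.sum_nonneg fun i _ => mul_self_nonneg _
    nlinarith [mul_nonneg hlam huu]
  rw [abs_le]
  exact ⟨hlower, hupper⟩
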